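/- arXiv:2108.00563 — 7 statements merged into one kernel-verified Lean document; each statement's English description precedes it below -/
import Mathlib

section
/- For every integer c ≥ 3, the number N(c) of reduced billiard table words of crossing number c satisfies, as an identity of real numbers, N(c) = (2^{c−2} + *)/3, where * = 2·cos((c−2)π/3) if c ≡ 1 (mod 3), * = 2·cos((c−4)π/3) if c ≡ 0 (mod 3), and * = 2·cos((c−6)π/3) if c ≡ 2 (mod 3). -/
/-- A reduced billiard table word of crossing number `c`: a function `ε` on `{1,…,c}`
with values in `{1,2}`, `ε 1 = 1 = ε c`, and total length `≡ 1 (mod 3)`. -/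
def IsWord (c : ℕ) (ε : ℕ → ℕ) : Prop :=
  (∀ i, 1 ≤ i → i ≤ c → ε i = 1 ∨ ε i = 2) ∧
  ε 1 = 1 ∧ ε c = 1 ∧ (∑ i ∈ Finset.Icc 1 c, ε i) % 3 = 1

/-- The set of reduced billiard table words of crossing number `c`, each word represented
by its unique extension by `0` outside `{1,…,c}`. -/
def WordSet (c : ℕ) : Set (ℕ → ℕ) :=
  {ε | IsWord c ε ∧ ∀ i, ¬(1 ≤ i ∧ i ≤ c) → ε i = 0}

/-- The starting position of crossing `i`: `p i = 1 + ∑_{j=1}^{i-1} ε j`. -/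
def pos (ε : ℕ → ℕ) (i : ℕ) : ℕ := 1 + ∑ j ∈ Finset.Icc 1 (i - 1), ε j

/-- Crossing `i` is horizontally smoothed. -/
def Horiz (ε : ℕ → ℕ) (i : ℕ) : Prop :=
  (ε i = 1 ∧ pos ε i % 3 = 1) ∨ (ε i = 2 ∧ pos ε i % 3 = 2)

/-- Crossing `i` is vertically smoothed. -/
def Vert (ε : ℕ → ℕ) (i : ℕ) : Prop := ¬ Horiz ε i

/-- The height of crossing `i`. -/
def height (ε : ℕ → ℕ) (i : ℕ) : ℕ :=
  if (Odd i ∧ ε i = 1) ∨ (Even i ∧ ε i = 2) then 1 else 2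

open Classical in
/-- The number of vertically smoothed crossings of `ε` (crossing number `c`). -/
noncomputable def vertCount (c : ℕ) (ε : ℕ → ℕ) : ℕ :=
  ((Finset.Icc 1 c).filter (fun i => Vert ε i)).card

/-- A vertically smoothed crossing `i` is viable if either no later crossing is vertically
smoothed, or the least vertically smoothed crossing `j > i` has the same height as `i`. -/
def Viable (c : ℕ) (ε : ℕ → ℕ) (i : ℕ) : Prop :=
  Vert ε i ∧
    ((∀ j, i < j → j ≤ c → ¬ Vert ε j) ∨
      ∃ j, i < j ∧ j ≤ c ∧ Vert ε j ∧ (∀ k, i < k → k < j → ¬ Vert ε k) ∧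
        height ε j = height ε i)

open Classical in
/-- The number of viable vertically smoothed crossings of `ε` (crossing number `c`). -/
noncomputable def viableCount (c : ℕ) (ε : ℕ → ℕ) : ℕ :=
  ((Finset.Icc 1 c).filter (fun i => Viable c ε i)).card



def w (t : ℕ) : ℤ :=
  if t % 6 = 0 then 2 else if t % 6 = 1 then 1 else if t % 6 = 2 then -1
  else if t % 6 = 3 then -2 else if t % 6 = 4 then -1 else 1

lemma w_congr {s t : ℕ} (h : s % 6 = t % 6) : w s = w t := by
  unfold w; rw [h]

lemma w_add_two (t : ℕ) : w t + w (t + 2) = w (t + 1) := by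
  have h2 : (t+2) % 6 = (t%6 + 2) % 6 := by omega
  have h1 : (t+1) % 6 = (t%6 + 1) % 6 := by omega
  have h6 : t % 6 < 6 := by omega
  unfold w
  rw [h1, h2]
  interval_cases h : t % 6 <;> norm_num

def cnt (t : Finset ℕ) (r : ℕ) : ℕ :=
  (t.powerset.filter (fun s => s.card % 3 = r)).card

lemma cnt_insert {a : ℕ} {t : Finset ℕ} (ha : a ∉ t) (r : ℕ) (hr : r < 3) :
    cnt (insert a t) r = cnt t r + cnt t ((r + 2) % 3) := by
  unfold cnt
  rw [Finset.powerset_insert, Finset.filter_union]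
  rw [Finset.card_union_of_disjoint]
  · congr 1
    rw [Finset.filter_image]
    rw [Finset.card_image_of_injOn]
    · congr 1
      apply Finset.filter_congr
      intro s hs
      simp only [Finset.mem_powerset] at hs
      have has : a ∉ s := fun h => ha (hs h)
      simp only [Finset.card_insert_of_notMem has]
      omega
    · intro s hs s' hs' h
      simp only [Finset.coe_filter, Set.mem_setOf_eq, Finset.mem_powerset] at hs hs'
      have h1 : a ∉ s := fun hh => ha (hs.1 hh)
      have h2 : a ∉ s' := fun hh => ha (hs'.1 hh)
      rw [← Finset.erase_insert h1, ← Finset.erase_insert h2, h]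
  · rw [Finset.disjoint_left]
    intro s hs hs'
    simp only [Finset.mem_filter, Finset.mem_powerset, Finset.mem_image] at hs hs'
    obtain ⟨u, hu, hu2⟩ := hs'.1
    exact ha (hs.1 (hu2 ▸ Finset.mem_insert_self a u))

lemma cnt_key (t : Finset ℕ) : ∀ r, r < 3 → 3 * (cnt t r : ℤ) = 2 ^ t.card + w (t.card + 4 * r) := by
  induction t using Finset.induction_on with
  | empty =>
    intro r hr
    interval_cases r <;> simp [cnt, w] <;> decide
  | @insert a t ha ih =>
    intro r hr
    rw [cnt_insert ha r hr, Finset.card_insert_of_notMem ha]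
    push_cast
    rw [mul_add, ih r hr, ih ((r+2)%3) (by omega)]
    have e1 : w (t.card + 4*((r+2)%3)) = w (t.card + 4*r + 2) := w_congr (by omega)
    have e2 := w_add_two (t.card + 4*r)
    have e3 : w (t.card + 1 + 4*r) = w (t.card + 4*r + 1) := w_congr (by omega)
    rw [e1, e3, pow_succ]
    linarith

lemma two_cos_eq (n : ℕ) : 2 * Real.cos ((n : ℝ) * Real.pi / 3) = (w n : ℝ) := by
  have hn : n = 6 * (n / 6) + n % 6 := by omega
  have harg : (n : ℝ) * Real.pi / 3
      = ((n % 6 : ℕ) : ℝ) * Real.pi / 3 + (n / 6 : ℕ) * (2 * Real.pi) := by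
    nth_rewrite 1 [hn]; push_cast; ring
  have hper : Real.cos ((n : ℝ) * Real.pi / 3) = Real.cos (((n % 6 : ℕ) : ℝ) * Real.pi / 3) := by
    rw [harg]
    exact_mod_cast Real.cos_add_nat_mul_two_pi _ (n / 6)
  rw [hper]
  have h6 : n % 6 < 6 := by omega
  unfold w
  interval_cases h : n % 6 <;> norm_num
  · rw [show (2:ℝ) * Real.pi / 3 = Real.pi - Real.pi/3 by ring, Real.cos_pi_sub,
      Real.cos_pi_div_three]; norm_num
  · rw [show (4:ℝ) * Real.pi / 3 = Real.pi/3 + Real.pi by ring, Real.cos_add_pi,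
      Real.cos_pi_div_three]; norm_num
  · rw [show (5:ℝ) * Real.pi / 3 = 2*Real.pi - Real.pi/3 by ring, Real.cos_two_pi_sub,
      Real.cos_pi_div_three]; norm_num

lemma sum_aux (c : ℕ) (hc : 3 ≤ c) (s : Finset ℕ) (hs : s ⊆ Finset.Icc 2 (c-1)) :
    (∑ i ∈ Finset.Icc 1 c, if 1 ≤ i ∧ i ≤ c then (if i ∈ s then 2 else 1) else 0)
      = c + s.card := by
  have hsub : s ⊆ Finset.Icc 1 c := hs.trans (Finset.Icc_subset_Icc (by omega) (by omega))
  have h1 : ∀ i ∈ Finset.Icc 1 c,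
      (if 1 ≤ i ∧ i ≤ c then (if i ∈ s then 2 else 1) else 0)
        = 1 + (if i ∈ s then 1 else 0) := by
    intro i hi
    rw [Finset.mem_Icc] at hi
    rw [if_pos hi]
    split <;> rfl
  rw [Finset.sum_congr rfl h1, Finset.sum_add_distrib, Finset.sum_const, Nat.card_Icc,
    Finset.sum_ite_mem, Finset.inter_eq_right.mpr hsub, Finset.sum_const]
  simp

lemma wordSet_ncard (c : ℕ) (hc : 3 ≤ c) :
    (WordSet c).ncard = cnt (Finset.Icc 2 (c - 1)) ((4 - c % 3) % 3) := by
  classical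
  set r := (4 - c % 3) % 3 with hrdef
  set φ : Finset ℕ → (ℕ → ℕ) :=
    fun s => fun i => if 1 ≤ i ∧ i ≤ c then (if i ∈ s then 2 else 1) else 0 with hφ
  set F := (Finset.Icc 2 (c-1)).powerset.filter (fun s => s.card % 3 = r) with hF
  have key : ∀ s, s ⊆ Finset.Icc 2 (c-1) → ∀ i, i ∈ s ↔ φ s i = 2 := by
    intro s hs i
    constructor
    · intro hmem
      have hi : 1 ≤ i ∧ i ≤ c := by
        have := hs hmem; rw [Finset.mem_Icc] at this; omega
      simp only [hφ, if_pos hi, if_pos hmem]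
    · intro h
      by_contra hni
      by_cases hi : 1 ≤ i ∧ i ≤ c
      · simp only [hφ, if_pos hi, if_neg hni] at h; omega
      · simp only [hφ, if_neg hi] at h; omega
  have himg : WordSet c = φ '' ↑F := by
    ext ε
    simp only [WordSet, IsWord, Set.mem_setOf_eq, Set.mem_image, Finset.mem_coe, hF,
      Finset.mem_filter, Finset.mem_powerset]
    constructor
    · rintro ⟨⟨hval, h1, hce, hsum⟩, hout⟩
      set s := (Finset.Icc 2 (c-1)).filter (fun i => ε i = 2) with hsdef
      have hssub : s ⊆ Finset.Icc 2 (c-1) := Finset.filter_subset _ _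
      have hεφ : φ s = ε := by
        funext i
        by_cases hi : 1 ≤ i ∧ i ≤ c
        · simp only [hφ, if_pos hi, hsdef, Finset.mem_filter, Finset.mem_Icc]
          rcases hval i hi.1 hi.2 with h | h
          · rw [if_neg, h]
            rintro ⟨-, h2⟩
            omega
          · rw [if_pos, h]
            have hne1 : i ≠ 1 := fun e => by rw [e] at h; omega
            have hnec : i ≠ c := fun e => by rw [e] at h; omega
            exact ⟨⟨by omega, by omega⟩, h⟩
        · simp only [hφ, if_neg hi]
          exact (hout i hi).symm
      rw [← hεφ] at hsum
      simp only [hφ] at hsum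
      rw [sum_aux c hc s hssub] at hsum
      refine ⟨s, ⟨hssub, by rw [hrdef]; omega⟩, hεφ⟩
    · rintro ⟨s, ⟨hs, hcard⟩, rfl⟩
      have h1s : (1:ℕ) ∉ s := fun h => by have := hs h; rw [Finset.mem_Icc] at this; omega
      have hcs : c ∉ s := fun h => by have := hs h; rw [Finset.mem_Icc] at this; omega
      refine ⟨⟨?_, ?_, ?_, ?_⟩, ?_⟩
      · intro i hi1 hi2
        simp only [hφ, if_pos (And.intro hi1 hi2)]
        by_cases h : i ∈ s <;> simp [h]
      · simp only [hφ, if_pos (And.intro le_rfl (by omega : 1 ≤ c)), if_neg h1s]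
      · simp only [hφ, if_pos (And.intro (by omega : 1 ≤ c) le_rfl), if_neg hcs]
      · rw [sum_aux c hc s hs]; omega
      · intro i hi; simp only [hφ, if_neg hi]
  have hinj : Set.InjOn φ ↑F := by
    intro s hs s' hs' h
    rw [Finset.mem_coe, hF, Finset.mem_filter, Finset.mem_powerset] at hs hs'
    ext i
    rw [key s hs.1 i, key s' hs'.1 i, h]
  rw [himg, Set.ncard_image_of_injOn hinj, Set.ncard_coe_finset]
  rfl


/-- The number of reduced billiard table words of crossing number `c` is
`(2^(c-2) + *)/3` where `*` is the indicated cosine correction term. -/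
theorem card_wordSet_eq (c : ℕ) (hc : 3 ≤ c) :
    ((WordSet c).ncard : ℝ) =
      (2 ^ (c - 2) +
        (if c % 3 = 1 then 2 * Real.cos (((c : ℝ) - 2) * Real.pi / 3)
         else if c % 3 = 0 then 2 * Real.cos (((c : ℝ) - 4) * Real.pi / 3)
         else 2 * Real.cos (((c : ℝ) - 6) * Real.pi / 3))) / 3 := by
  have hr : (4 - c % 3) % 3 < 3 := by omega
  have hkey := cnt_key (Finset.Icc 2 (c-1)) _ hr
  rw [Nat.card_Icc] at hkey
  rw [show c - 1 + 1 - 2 = c - 2 by omega] at hkey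
  rw [wordSet_ncard c hc]
  have h3 : c % 3 = 0 ∨ c % 3 = 1 ∨ c % 3 = 2 := by omega
  have cast_key : ∀ X : ℝ, (w (c - 2 + 4 * ((4 - c % 3) % 3)) : ℝ) = X →
      (↑(cnt (Finset.Icc 2 (c - 1)) ((4 - c % 3) % 3)) : ℝ) = (2 ^ (c - 2) + X) / 3 := by
    intro X hX
    rw [← hX, eq_div_iff (by norm_num : (3:ℝ) ≠ 0)]
    have := congrArg (Int.cast : ℤ → ℝ) hkey
    push_cast at this
    linarith
  rcases h3 with h | h | h
  · rw [if_neg (by omega), if_pos h]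
    apply cast_key
    have harg : ((c:ℝ) - 4) * Real.pi / 3 = ((c + 2 : ℕ) : ℝ) * Real.pi / 3 - 2 * Real.pi := by
      push_cast; ring
    rw [harg, Real.cos_sub_two_pi, two_cos_eq]
    exact congrArg _ (w_congr (by omega)).symm
  · rw [if_pos h]
    apply cast_key
    have harg : ((c:ℝ) - 2) * Real.pi / 3 = ((c + 4 : ℕ) : ℝ) * Real.pi / 3 - 2 * Real.pi := by
      push_cast; ring
    rw [harg, Real.cos_sub_two_pi, two_cos_eq]
    exact congrArg _ (w_congr (by omega)).symm
  · rw [if_neg (by omega), if_neg (by omega)]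
    apply cast_key
    have harg : ((c:ℝ) - 6) * Real.pi / 3 = ((c : ℕ) : ℝ) * Real.pi / 3 - 2 * Real.pi := by
      ring
    rw [harg, Real.cos_sub_two_pi, two_cos_eq]
    exact congrArg _ (w_congr (by omega)).symm
end

section
/- Let c ≥ 3 and let ε be a reduced billiard table word of crossing number c in which every crossing is horizontally smoothed. Then c is odd and ε(i) = 1 for every odd i and ε(i) = 2 for every even i with 1 ≤ i ≤ c. -/
lemma pos_succ_aux (ε : ℕ → ℕ) (i : ℕ) (hi : 1 ≤ i) :
    pos ε (i + 1) = pos ε i + ε i := by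
  obtain ⟨k, rfl⟩ : ∃ k, i = k + 1 := ⟨i - 1, (Nat.succ_pred_eq_of_pos hi).symm⟩
  unfold pos
  simp only [Nat.add_sub_cancel]
  rw [Finset.sum_Icc_succ_top (by omega : 1 ≤ k + 1)]
  omega

/-- If every crossing of a reduced billiard table word is horizontally smoothed,
then `c` is odd and the word is `1` at odd indices and `2` at even indices. -/
theorem all_horiz_implies (c : ℕ) (hc : 3 ≤ c) (ε : ℕ → ℕ) (hw : IsWord c ε)
    (hall : ∀ i, 1 ≤ i → i ≤ c → Horiz ε i) :
    Odd c ∧ ∀ i, 1 ≤ i → i ≤ c → (Odd i → ε i = 1) ∧ (Even i → ε i = 2) := by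
  have key : ∀ i, 1 ≤ i → i ≤ c →
      pos ε i % 3 = (if Odd i then 1 else 2) ∧ ε i = (if Odd i then 1 else 2) := by
    intro i hi
    induction i, hi using Nat.le_induction with
    | base =>
      intro _
      have hp : pos ε 1 = 1 := by simp [pos]
      simp [hp, hw.2.1]
    | succ i hi ih =>
      intro hic
      obtain ⟨hp, he⟩ := ih (by omega)
      have hps := pos_succ_aux ε i hi
      have hh := hall (i + 1) (by omega) hic
      rcases Nat.even_or_odd i with hev | hod
      · have h1 : ¬ Odd i := by simp [Nat.not_odd_iff_even, hev]
        have h2 : Odd (i + 1) := Even.add_one hev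
        simp only [h1, if_false] at hp he
        have hp' : pos ε (i + 1) % 3 = 1 := by omega
        rcases hh with ⟨he', _⟩ | ⟨_, hp''⟩
        · simp [h2, hp', he']
        · omega
      · have h2 : ¬ Odd (i + 1) := by
          simp [Nat.not_odd_iff_even, Nat.even_add_one, Nat.not_even_iff_odd, hod]
        simp only [hod, if_true] at hp he
        have hp' : pos ε (i + 1) % 3 = 2 := by omega
        rcases hh with ⟨_, hp''⟩ | ⟨he', _⟩
        · omega
        · simp [h2, hp', he']
  have hoddc : Odd c := by
    by_contra h
    have := (key c (by omega) le_rfl).2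
    rw [if_neg h] at this
    have := hw.2.2.1
    omega
  refine ⟨hoddc, fun i h1 h2 => ⟨fun ho => ?_, fun he => ?_⟩⟩
  · have := (key i h1 h2).2; rwa [if_pos ho] at this
  · have := (key i h1 h2).2
    rwa [if_neg (by simpa [Nat.not_odd_iff_even] using he)] at this
end

section
/- Let c ≥ 3 and let ε be a reduced billiard table word of crossing number c that has at least one vertically smoothed crossing. Then the smallest index i such that crossing i is vertically smoothed satisfies h(i) = 2. -/
/-- The first vertically smoothed crossing of a reduced billiard table word has height `2`. -/
theorem first_vert_height (c : ℕ) (hc : 3 ≤ c) (ε : ℕ → ℕ) (hw : IsWord c ε)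
    (i : ℕ) (h1 : 1 ≤ i) (h2 : i ≤ c) (hv : Vert ε i)
    (hmin : ∀ j, 1 ≤ j → j < i → ¬ Vert ε j) :
    height ε i = 2 := by
  have hstep : ∀ j, 1 ≤ j → pos ε (j + 1) = pos ε j + ε j := by
    intro j hj
    obtain ⟨k, rfl⟩ : ∃ k, j = k + 1 := ⟨j - 1, by omega⟩
    simp only [pos, Nat.add_sub_cancel]
    rw [Finset.sum_Icc_succ_top (by omega)]
    omega
  have inv : ∀ j, 1 ≤ j → j ≤ i → pos ε j % 3 = if Odd j then 1 else 2 := by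
    intro j hj
    induction j, hj using Nat.le_induction with
    | base => intro _; simp [pos]
    | succ j hj ih =>
      intro hji
      have hji' : j < i := by omega
      have hinv := ih (le_of_lt hji')
      have hhor : Horiz ε j := not_not.mp (hmin j hj hji')
      have hpar : Odd (j + 1) ↔ ¬ Odd j := Nat.odd_add_one
      rw [hstep j hj]
      rcases hhor with ⟨he, hp⟩ | ⟨he, hp⟩
      · have hoj : Odd j := by
          by_contra h; rw [if_neg h] at hinv; omega
        rw [if_neg (by simp [Nat.odd_add_one, hoj]), he]; omega
      · have hoj : ¬ Odd j := by
          intro h; rw [if_pos h] at hinv; omega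
        rw [if_pos (Nat.odd_add_one.mpr hoj), he]; omega
  have hpi := inv i h1 le_rfl
  have hei := hw.1 i h1 h2
  rcases Nat.even_or_odd i with hpar | hpar
  · have hnot : ¬ Odd i := Nat.not_odd_iff_even.mpr hpar
    rw [if_neg hnot] at hpi
    have he : ε i = 1 := by
      rcases hei with h | h
      · exact h
      · exact absurd (Or.inr ⟨h, hpi⟩) hv
    simp [height, he, hnot]
  · rw [if_pos hpar] at hpi
    have he : ε i = 2 := by
      rcases hei with h | h
      · exact absurd (Or.inl ⟨h, hpi⟩) hv
      · exact h
    have hnot : ¬ Even i := Nat.not_even_iff_odd.mpr hpar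
    simp [height, he, hnot]
end

section
/- Let c ≥ 3 and let ε be a reduced billiard table word of crossing number c that has at least one vertically smoothed crossing, and let i be the largest index such that crossing i is vertically smoothed. If c is odd then h(i) = 2, and if c is even then h(i) = 1. -/
/-- The last vertically smoothed crossing of a reduced billiard table word has height `2`
when `c` is odd and height `1` when `c` is even. -/
theorem last_vert_height (c : ℕ) (hc : 3 ≤ c) (ε : ℕ → ℕ) (hw : IsWord c ε)
    (i : ℕ) (h1 : 1 ≤ i) (h2 : i ≤ c) (hv : Vert ε i)
    (hmax : ∀ j, i < j → j ≤ c → ¬ Vert ε j) :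
    (Odd c → height ε i = 2) ∧ (Even c → height ε i = 1) := by
  obtain ⟨hvals, he1, hec, hsum⟩ := hw
  -- pos at c equals the total sum mod 3
  have hposc : pos ε c % 3 = 1 ∧ ε c = 1 := by
    refine ⟨?_, hec⟩
    have hc1 : c = (c - 1) + 1 := by omega
    have : (∑ j ∈ Finset.Icc 1 c, ε j) = (∑ j ∈ Finset.Icc 1 (c - 1), ε j) + ε c := by
      rw [hc1, Finset.sum_Icc_succ_top (by omega)]
      rw [← hc1]
    unfold pos
    omega
  have pos_succ : ∀ j, 1 ≤ j → pos ε (j + 1) = pos ε j + ε j := by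
    intro j hj
    obtain ⟨k, rfl⟩ : ∃ k, j = k + 1 := ⟨j - 1, by omega⟩
    simp only [pos, Nat.add_sub_cancel]
    rw [Finset.sum_Icc_succ_top (by omega : 1 ≤ k + 1)]
    ring
  -- key backward induction
  have key : ∀ d j, j = c - d → i + 1 ≤ j → j ≤ c →
      (if d % 2 = 0 then pos ε j % 3 = 1 ∧ ε j = 1 else pos ε j % 3 = 2 ∧ ε j = 2) := by
    intro d
    induction d with
    | zero =>
      intro j hj _ _
      have : j = c := by omega
      subst this
      simpa using hposc
    | succ d ih =>
      intro j hj hji hjc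
      have hj1 : j + 1 = c - d := by omega
      have hIH := ih (j + 1) hj1 (by omega) (by omega)
      have hH : Horiz ε j := by
        by_contra h
        exact hmax j (by omega) hjc h
      have hps := pos_succ j (by omega)
      by_cases hd : d % 2 = 0
      · have hd1 : (d + 1) % 2 ≠ 0 := by omega
        rw [if_pos hd] at hIH
        rw [if_neg hd1]
        rcases hH with ⟨he, hp⟩ | ⟨he, hp⟩ <;> rw [he] at hps <;> omega
      · have hd1 : (d + 1) % 2 = 0 := by omega
        rw [if_neg hd] at hIH
        rw [if_pos hd1]
        rcases hH with ⟨he, hp⟩ | ⟨he, hp⟩ <;> rw [he] at hps <;> omega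
  -- i cannot be c
  have hic : i < c := by
    rcases eq_or_lt_of_le h2 with rfl | h
    · exact absurd (Or.inl ⟨hec, hposc.1⟩) hv
    · exact h
  have hkey := key (c - (i + 1)) (i + 1) (by omega) le_rfl (by omega)
  have hps := pos_succ i h1
  have hei := hvals i h1 h2
  have hnH : ¬ Horiz ε i := hv
  simp only [Horiz, not_or, not_and] at hnH
  have hpar : (if (c - (i + 1)) % 2 = 0 then c % 2 ≠ i % 2 else c % 2 = i % 2) := by
    split <;> omega
  constructor <;> intro hcpar
  · -- c odd
    rw [Nat.odd_iff] at hcpar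
    rcases hei with he | he
    · -- ε i = 1 : forces (c - (i+1)) even, so i even
      have hd : (c - (i + 1)) % 2 = 0 := by
        by_contra hd
        simp only [hd, if_neg, if_false] at hkey hpar
        have := hnH.1 he
        rw [he] at hps
        omega
      simp only [hd, if_pos, if_true] at hpar
      have hie : i % 2 = 0 := by omega
      simp only [height, he, Nat.odd_iff, Nat.even_iff, hie]
      norm_num
    · have hd : (c - (i + 1)) % 2 ≠ 0 := by
        intro hd
        simp only [hd, if_pos, if_true] at hkey
        have := hnH.2 he
        rw [he] at hps
        omega
      simp only [hd, if_neg, if_false] at hpar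
      have hio : i % 2 = 1 := by omega
      simp only [height, he, Nat.odd_iff, Nat.even_iff, hio]
      norm_num
  · -- c even
    rw [Nat.even_iff] at hcpar
    rcases hei with he | he
    · have hd : (c - (i + 1)) % 2 = 0 := by
        by_contra hd
        simp only [hd, if_neg, if_false] at hkey
        have := hnH.1 he
        rw [he] at hps
        omega
      simp only [hd, if_pos, if_true] at hpar
      have hio : i % 2 = 1 := by omega
      simp only [height, he, Nat.odd_iff, Nat.even_iff, hio]
      norm_num
    · have hd : (c - (i + 1)) % 2 ≠ 0 := by
        intro hd
        simp only [hd, if_pos, if_true] at hkey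
        have := hnH.2 he
        rw [he] at hps
        omega
      simp only [hd, if_neg, if_false] at hpar
      have hie : i % 2 = 0 := by omega
      simp only [height, he, Nat.odd_iff, Nat.even_iff, hie]
      norm_num
end

section
/- Let c ≥ 3 and let ε be a reduced billiard table word of crossing number c. Then the total number of vertically smoothed crossings of ε is at most twice the number of viable vertically smoothed crossings of ε. -/
open Finset

lemma pos_succ (ε : ℕ → ℕ) {i : ℕ} (hi : 1 ≤ i) : pos ε (i + 1) = pos ε i + ε i := by
  obtain ⟨m, rfl⟩ : ∃ m, i = m + 1 := ⟨i - 1, by omega⟩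
  simp only [pos, Nat.add_sub_cancel, sum_Icc_succ_top (by omega : 1 ≤ m + 1)]
  ring

lemma IsWord.pos_end_mod_three {c : ℕ} {ε : ℕ → ℕ} (hw : IsWord c ε) :
    pos ε (c + 1) % 3 = 2 := by
  have := hw.2.2.2
  simp only [pos, Nat.add_sub_cancel]
  omega

lemma vert_of_pos_mod_three_eq_zero {ε : ℕ → ℕ} {i : ℕ} (hp : pos ε i % 3 = 0) : Vert ε i := by
  unfold Vert Horiz
  omega

lemma Vert.pos_succ_mod_three_eq_zero {ε : ℕ → ℕ} {i : ℕ} (hv : Vert ε i) (hi : 1 ≤ i)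
    (he : ε i = 1 ∨ ε i = 2) (hp : pos ε i % 3 ≠ 0) : pos ε (i + 1) % 3 = 0 := by
  unfold Vert Horiz at hv
  rw [pos_succ ε hi]
  omega

lemma Horiz.pos_succ_mod_three {ε : ℕ → ℕ} {i : ℕ} (hh : Horiz ε i) (hi : 1 ≤ i) :
    pos ε (i + 1) % 3 ≠ 0 ∧ (pos ε (i + 1) % 3 + (i + 1)) % 2 = (pos ε i % 3 + i) % 2 := by
  rw [pos_succ ε hi]
  rcases hh with ⟨he, hp⟩ | ⟨he, hp⟩ <;> omega

lemma pos_mod_three_parity_of_horiz {ε : ℕ → ℕ} {a b : ℕ} (ha : 1 ≤ a) (hab : a ≤ b)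
    (hpa : pos ε a % 3 ≠ 0) (hh : ∀ k, a ≤ k → k < b → Horiz ε k) :
    pos ε b % 3 ≠ 0 ∧ (pos ε b % 3 + b) % 2 = (pos ε a % 3 + a) % 2 := by
  induction b, hab using Nat.le_induction with
  | base => exact ⟨hpa, rfl⟩
  | succ b hab ih =>
    obtain ⟨-, hpar⟩ := ih fun k hak hkb => hh k hak (by omega)
    obtain ⟨hnz, hstep⟩ := (hh b hab (by omega)).pos_succ_mod_three (by omega)
    exact ⟨hnz, hstep.trans hpar⟩

lemma height_eq_ite {ε : ℕ → ℕ} {i : ℕ} (he : ε i = 1 ∨ ε i = 2) :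
    height ε i = if (i + ε i) % 2 = 0 then 1 else 2 := by
  unfold height
  simp only [Nat.odd_iff, Nat.even_iff]
  split_ifs <;> omega

lemma viable_of_pos_mod_three_eq_zero {c : ℕ} {ε : ℕ → ℕ}
    (hε : ∀ i, 1 ≤ i → i ≤ c → ε i = 1 ∨ ε i = 2) {i : ℕ} (hi : 1 ≤ i) (hic : i ≤ c)
    (hp : pos ε i % 3 = 0) : Viable c ε i := by
  refine ⟨vert_of_pos_mod_three_eq_zero hp, ?_⟩
  by_cases hlater : ∃ j, i < j ∧ j ≤ c ∧ Vert ε j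
  swap
  · exact Or.inl fun j hij hjc hvj => hlater ⟨j, hij, hjc, hvj⟩
  classical
  obtain ⟨hij, hjc, hvj⟩ := Nat.find_spec hlater
  have hmin : ∀ k, i < k → k < Nat.find hlater → ¬ Vert ε k :=
    fun k hik hkj hvk => Nat.find_min hlater hkj ⟨hik, by omega, hvk⟩
  refine Or.inr ⟨_, hij, hjc, hvj, hmin, ?_⟩
  set j := Nat.find hlater
  have hei := hε i hi hic
  have hej := hε j (by omega) hjc
  obtain ⟨hpj, hpar⟩ := pos_mod_three_parity_of_horiz (a := i + 1) (b := j) (by omega) hij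
    (by rw [pos_succ ε hi]; omega) fun k hik hkj => not_not.mp (hmin k hik hkj)
  rw [pos_succ ε hi] at hpar
  -- `Vert ε j` with `p(j) ≢ 0` forces `p(j) ≡ -ε(j)`, so `hpar` says `j + ε j ≡ i + ε i (mod 2)`.
  unfold Vert Horiz at hvj
  rw [height_eq_ite hei, height_eq_ite hej]
  split_ifs <;> omega

open Classical in
lemma card_vert_pos_mod_three_ne_zero_le {c : ℕ} {ε : ℕ → ℕ} (hw : IsWord c ε) :
    #{i ∈ Icc 1 c | Vert ε i ∧ pos ε i % 3 ≠ 0} ≤ #{i ∈ Icc 1 c | pos ε i % 3 = 0} := by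
  refine card_le_card_of_injOn (· + 1) (fun i hi => ?_) (fun a _ b _ hab => by simpa using hab)
  simp only [coe_filter, mem_Icc, Set.mem_ofPred_eq] at hi ⊢
  obtain ⟨⟨hi1, hic⟩, hv, hp⟩ := hi
  have hzero := hv.pos_succ_mod_three_eq_zero hi1 (hw.1 i hi1 hic) hp
  have hlast := hw.pos_end_mod_three
  have hne : i ≠ c := by rintro rfl; omega
  exact ⟨⟨by omega, by omega⟩, hzero⟩

open Classical in
lemma card_pos_mod_three_eq_zero_le_viableCount {c : ℕ} {ε : ℕ → ℕ}
    (hε : ∀ i, 1 ≤ i → i ≤ c → ε i = 1 ∨ ε i = 2) :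
    #{i ∈ Icc 1 c | pos ε i % 3 = 0} ≤ viableCount c ε := by
  refine card_le_card fun i hi => ?_
  simp only [mem_filter, mem_Icc] at hi ⊢
  exact ⟨hi.1, viable_of_pos_mod_three_eq_zero hε hi.1.1 hi.1.2 hi.2⟩

theorem vertCount_le_two_mul_viableCount_general (c : ℕ) (ε : ℕ → ℕ)
    (hw : IsWord c ε) :
    vertCount c ε ≤ 2 * viableCount c ε := by
  classical
  have hsplit : vertCount c ε = #{i ∈ Icc 1 c | pos ε i % 3 = 0}
      + #{i ∈ Icc 1 c | Vert ε i ∧ pos ε i % 3 ≠ 0} := by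
    rw [vertCount, ← card_filter_add_card_filter_not (p := fun i => pos ε i % 3 = 0),
      filter_filter, filter_filter]
    congr 2
    exact filter_congr fun i _ => ⟨And.right, fun hp => ⟨vert_of_pos_mod_three_eq_zero hp, hp⟩⟩
  have hshift := card_vert_pos_mod_three_ne_zero_le hw
  have hviable := card_pos_mod_three_eq_zero_le_viableCount hw.1
  omega

/-- The total number of vertically smoothed crossings is at most twice the number of
viable vertically smoothed crossings. -/
theorem vertCount_le_two_mul_viableCount (c : ℕ) (hc : 3 ≤ c) (ε : ℕ → ℕ)
    (hw : IsWord c ε) :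
    vertCount c ε ≤ 2 * viableCount c ε :=
  vertCount_le_two_mul_viableCount_general c ε hw
end

section
/- For every integer c ≥ 3, the sum, over all reduced billiard table words ε of crossing number c, of the number of vertically smoothed crossings of ε equals ∑_{i=2}^{c−1} ∑_{d1=0}^{i−2} ∑_{d2} C(i−2, d1)·[i + d1 ≢ 1 (mod 3)]·C(c−i−1, d2) + ∑_{i=2}^{c−1} ∑_{d1=0}^{i−2} ∑_{d2'} C(i−2, d1)·[i + d1 ≢ 2 (mod 3)]·C(c−i−1, d2'), where in the first triple sum d2 ranges over 0 ≤ d2 ≤ c−i−1 with c + d1 + d2 ≡ 1 (mod 3), in the second triple sum d2' ranges over 0 ≤ d2' ≤ c−i−1 with c + d1 + 1 + d2' ≡ 1 (mod 3), C(n,k) is the binomial coefficient, and [P] is 1 if the condition P holds and 0 otherwise. -/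
/-! ### Auxiliary definitions and lemmas -/

namespace BilliardAux

open Finset

/-- The word encoded by a set `S` of positions carrying the value `2`. -/
def eWord (c : ℕ) (S : Finset ℕ) : ℕ → ℕ :=
  fun i => if 1 ≤ i ∧ i ≤ c then (if i ∈ S then 2 else 1) else 0

/-- The finset of valid encodings. -/
noncomputable def valid (c : ℕ) : Finset (Finset ℕ) :=
  (Finset.Icc 2 (c - 1)).powerset.filter (fun S => (c + S.card) % 3 = 1)

open Classical in
/-- The finset of words of crossing number `c`. -/
noncomputable def WFin (c : ℕ) : Finset (ℕ → ℕ) := (valid c).image (eWord c)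

lemma sum_eWord_Icc (c : ℕ) (S : Finset ℕ) {a b : ℕ} (ha : 1 ≤ a) (hb : b ≤ c) :
    ∑ j ∈ Finset.Icc a b, eWord c S j
      = (Finset.Icc a b).card + (S ∩ Finset.Icc a b).card := by
  classical
  have h : ∀ j ∈ Finset.Icc a b, eWord c S j = 1 + (if j ∈ S then 1 else 0) := by
    intro j hj
    rw [Finset.mem_Icc] at hj
    unfold eWord
    rw [if_pos ⟨le_trans ha hj.1, le_trans hj.2 hb⟩]
    split <;> rfl
  rw [Finset.sum_congr rfl h, Finset.sum_add_distrib, Finset.sum_const, smul_eq_mul, mul_one,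
    Finset.sum_boole, Nat.cast_id, Finset.filter_mem_eq_inter, Finset.inter_comm]

lemma pos_eWord {c : ℕ} (S : Finset ℕ) (hS : S ⊆ Finset.Icc 2 (c - 1)) {i : ℕ}
    (hi1 : 1 ≤ i) (hic : i ≤ c) :
    pos (eWord c S) i = i + (S.filter (· < i)).card := by
  classical
  have hsum := sum_eWord_Icc c S (a := 1) (b := i - 1) le_rfl (by omega)
  have hfil : S ∩ Finset.Icc 1 (i - 1) = S.filter (· < i) := by
    ext x
    simp only [Finset.mem_inter, Finset.mem_Icc, Finset.mem_filter]
    constructor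
    · rintro ⟨hx, h1, h2⟩; exact ⟨hx, by omega⟩
    · rintro ⟨hx, h2⟩
      have := hS hx
      rw [Finset.mem_Icc] at this
      exact ⟨hx, by omega, by omega⟩
  rw [pos, hsum, hfil, Nat.card_Icc]
  omega

lemma sum_eWord_total {c : ℕ} (S : Finset ℕ) (hc : 1 ≤ c) (hS : S ⊆ Finset.Icc 2 (c - 1)) :
    ∑ j ∈ Finset.Icc 1 c, eWord c S j = c + S.card := by
  rw [sum_eWord_Icc c S le_rfl le_rfl, Nat.card_Icc]
  have : S ∩ Finset.Icc 1 c = S := by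
    apply Finset.inter_eq_left.2
    intro x hx
    have := hS hx
    rw [Finset.mem_Icc] at this ⊢
    omega
  rw [this]
  omega

lemma eWord_injOn {c : ℕ} : ∀ S ∈ valid c, ∀ T ∈ valid c, eWord c S = eWord c T → S = T := by
  intro S hS T hT h
  rw [valid, Finset.mem_filter, Finset.mem_powerset] at hS hT
  ext x
  constructor
  · intro hx
    have hxI := hS.1 hx
    rw [Finset.mem_Icc] at hxI
    have hrange : 1 ≤ x ∧ x ≤ c := by omega
    have := congrFun h x
    unfold eWord at this
    rw [if_pos hrange, if_pos hrange, if_pos hx] at this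
    by_contra hT'
    rw [if_neg hT'] at this
    omega
  · intro hx
    have hxI := hT.1 hx
    rw [Finset.mem_Icc] at hxI
    have hrange : 1 ≤ x ∧ x ≤ c := by omega
    have := congrFun h x
    unfold eWord at this
    rw [if_pos hrange, if_pos hrange, if_pos hx] at this
    by_contra hS'
    rw [if_neg hS'] at this
    omega

lemma wordSet_eq {c : ℕ} (hc : 3 ≤ c) : WordSet c = ↑(WFin c) := by
  classical
  ext ε
  simp only [WFin, Finset.coe_image, Set.mem_image, Finset.mem_coe]
  constructor
  · rintro ⟨⟨hval, h1, hcv, hmod⟩, hout⟩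
    have heq : ∀ j, eWord c ((Finset.Icc 2 (c - 1)).filter (fun i => ε i = 2)) j = ε j := by
      intro j
      unfold eWord
      by_cases hj : 1 ≤ j ∧ j ≤ c
      · rw [if_pos hj]
        rcases hval j hj.1 hj.2 with h | h
        · rw [if_neg, h]
          simp only [Finset.mem_filter]
          rintro ⟨-, h2⟩
          omega
        · have hj1 : j ≠ 1 := fun e => by rw [e] at h; omega
          have hjc' : j ≠ c := fun e => by rw [e] at h; omega
          rw [if_pos, h]
          simp only [Finset.mem_filter, Finset.mem_Icc]
          exact ⟨⟨by omega, by omega⟩, h⟩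
      · rw [if_neg hj, hout j hj]
    refine ⟨(Finset.Icc 2 (c - 1)).filter (fun i => ε i = 2), ?_, funext heq⟩
    rw [valid, Finset.mem_filter, Finset.mem_powerset]
    refine ⟨Finset.filter_subset _ _, ?_⟩
    have h2 : (∑ j ∈ Finset.Icc 1 c, ε j)
        = c + ((Finset.Icc 2 (c - 1)).filter (fun i => ε i = 2)).card :=
      (Finset.sum_congr rfl (fun j _ => (heq j).symm)).trans
        (sum_eWord_total ((Finset.Icc 2 (c - 1)).filter (fun i => ε i = 2))
          (by omega) (Finset.filter_subset _ _))
    omega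
  · rintro ⟨S, hS, rfl⟩
    rw [valid, Finset.mem_filter, Finset.mem_powerset] at hS
    obtain ⟨hsub, hmod⟩ := hS
    have h1S : 1 ∉ S := fun h => by have := hsub h; rw [Finset.mem_Icc] at this; omega
    have hcS : c ∉ S := fun h => by have := hsub h; rw [Finset.mem_Icc] at this; omega
    refine ⟨⟨?_, ?_, ?_, ?_⟩, ?_⟩
    · intro i h1 h2
      unfold eWord
      rw [if_pos ⟨h1, h2⟩]
      split
      · right; rfl
      · left; rfl
    · unfold eWord
      rw [if_pos ⟨le_rfl, by omega⟩, if_neg h1S]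
    · unfold eWord
      rw [if_pos ⟨by omega, le_rfl⟩, if_neg hcS]
    · rw [sum_eWord_total S (by omega) hsub, hmod]
    · intro i hi
      unfold eWord
      rw [if_neg hi]

open Classical in
/-- Indicator that crossing `i` of the word encoded by `S` is vertically smoothed. -/
noncomputable def vind (c : ℕ) (S : Finset ℕ) (i : ℕ) : ℕ :=
  if Vert (eWord c S) i then 1 else 0

lemma vertCount_eWord {c : ℕ} (hc : 3 ≤ c) (S : Finset ℕ) (hS : S ∈ valid c) :
    vertCount c (eWord c S) = ∑ i ∈ Finset.Icc 2 (c - 1), vind c S i := by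
  classical
  rw [valid, Finset.mem_filter, Finset.mem_powerset] at hS
  obtain ⟨hsub, hmod⟩ := hS
  have h1S : 1 ∉ S := fun h => by have := hsub h; rw [Finset.mem_Icc] at this; omega
  have hcS : c ∉ S := fun h => by have := hsub h; rw [Finset.mem_Icc] at this; omega
  have hnv1 : ¬ Vert (eWord c S) 1 := by
    rw [Vert, not_not, Horiz]
    left
    constructor
    · unfold eWord; rw [if_pos ⟨le_rfl, by omega⟩, if_neg h1S]
    · rw [pos]
      norm_num
  have hnvc : ¬ Vert (eWord c S) c := by
    rw [Vert, not_not, Horiz]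
    left
    constructor
    · unfold eWord; rw [if_pos ⟨by omega, le_rfl⟩, if_neg hcS]
    · have hpos : pos (eWord c S) c = c + S.card := by
        rw [pos, sum_eWord_Icc c S le_rfl (by omega), Nat.card_Icc]
        have : S ∩ Finset.Icc 1 (c - 1) = S := by
          apply Finset.inter_eq_left.2
          intro x hx
          have := hsub hx
          rw [Finset.mem_Icc] at this ⊢
          omega
        rw [this]
        omega
      rw [hpos]
      exact hmod
  rw [vertCount, Finset.card_filter]
  have hIcc : Finset.Icc 1 c = insert 1 (insert c (Finset.Icc 2 (c - 1))) := by
    ext x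
    simp only [Finset.mem_Icc, Finset.mem_insert]
    omega
  rw [hIcc, Finset.sum_insert, Finset.sum_insert]
  · rw [if_neg hnv1, if_neg hnvc, zero_add, zero_add]
    apply Finset.sum_congr rfl
    intro i _
    rw [vind]
  · rw [Finset.mem_Icc]; omega
  · simp only [Finset.mem_insert, Finset.mem_Icc]; omega

lemma sum_powerset_union {s : Finset ℕ} (t : Finset ℕ) :
    ∀ f : Finset ℕ → ℕ, Disjoint s t →
      ∑ S ∈ (s ∪ t).powerset, f S = ∑ A ∈ s.powerset, ∑ B ∈ t.powerset, f (A ∪ B) := by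
  classical
  induction t using Finset.induction_on with
  | empty => intro f _; simp
  | @insert a t' ha ih =>
      intro f h
      have hd : Disjoint s t' := h.mono_right (Finset.subset_insert a t')
      have has : a ∉ s ∪ t' := by
        simp only [Finset.mem_union, not_or]
        exact ⟨fun hmem => (Finset.disjoint_right.mp h (Finset.mem_insert_self a t')) hmem, ha⟩
      have hu : s ∪ insert a t' = insert a (s ∪ t') := by
        ext x; simp only [Finset.mem_union, Finset.mem_insert]; tauto
      rw [hu, Finset.sum_powerset_insert has, ih f hd, ih (fun T => f (insert a T)) hd,
        ← Finset.sum_add_distrib]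
      apply Finset.sum_congr rfl
      intro A _
      rw [Finset.sum_powerset_insert ha (fun B => f (A ∪ B))]
      apply congrArg
      apply Finset.sum_congr rfl
      intro B _
      rw [Finset.union_insert]


lemma eval1 {c i : ℕ} (hc : 3 ≤ c) (hi2 : 2 ≤ i) (hic : i ≤ c - 1)
    {A B : Finset ℕ} (hA : A ⊆ Finset.Icc 2 (i - 1)) (hB : B ⊆ Finset.Icc (i + 1) (c - 1)) :
    (if (c + (A ∪ B).card) % 3 = 1 then vind c (A ∪ B) i else 0)
      = if (c + A.card + B.card) % 3 = 1 then (if (i + A.card) % 3 = 1 then 0 else 1) else 0 := by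
  classical
  have hAx : ∀ x ∈ A, 2 ≤ x ∧ x ≤ i - 1 := fun x hx => Finset.mem_Icc.mp (hA hx)
  have hBx : ∀ x ∈ B, i + 1 ≤ x ∧ x ≤ c - 1 := fun x hx => Finset.mem_Icc.mp (hB hx)
  have hdAB : Disjoint A B := by
    rw [Finset.disjoint_left]
    intro x hx hx'
    have := hAx x hx; have := hBx x hx'; omega
  have hiAB : i ∉ A ∪ B := by
    rw [Finset.mem_union]
    rintro (h | h)
    · have := hAx i h; omega
    · have := hBx i h; omega
  have hsub : A ∪ B ⊆ Finset.Icc 2 (c - 1) := by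
    intro x hx
    rw [Finset.mem_Icc]
    rcases Finset.mem_union.mp hx with h | h
    · have := hAx x h; omega
    · have := hBx x h; omega
  have hfil : (A ∪ B).filter (· < i) = A := by
    ext x
    simp only [Finset.mem_filter, Finset.mem_union]
    constructor
    · rintro ⟨h | h, hlt⟩
      · exact h
      · have := hBx x h; omega
    · intro h
      have := hAx x h
      exact ⟨Or.inl h, by omega⟩
  have hpos : pos (eWord c (A ∪ B)) i = i + A.card := by
    rw [pos_eWord _ hsub (by omega) (by omega), hfil]
  have he : eWord c (A ∪ B) i = 1 := by
    unfold eWord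
    rw [if_pos ⟨by omega, by omega⟩, if_neg hiAB]
  have hv : vind c (A ∪ B) i = if (i + A.card) % 3 = 1 then 0 else 1 := by
    rw [vind]
    have hiff : Vert (eWord c (A ∪ B)) i ↔ ¬ ((i + A.card) % 3 = 1) := by
      rw [Vert, Horiz, he, hpos]
      norm_num
    rw [if_congr hiff rfl rfl, ite_not]
  rw [Finset.card_union_of_disjoint hdAB, hv, ← add_assoc]

lemma eval2 {c i : ℕ} (hc : 3 ≤ c) (hi2 : 2 ≤ i) (hic : i ≤ c - 1)
    {A B : Finset ℕ} (hA : A ⊆ Finset.Icc 2 (i - 1)) (hB : B ⊆ Finset.Icc (i + 1) (c - 1)) :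
    (if (c + (A ∪ insert i B).card) % 3 = 1 then vind c (A ∪ insert i B) i else 0)
      = if (c + A.card + 1 + B.card) % 3 = 1 then (if (i + A.card) % 3 = 2 then 0 else 1) else 0 := by
  classical
  have hAx : ∀ x ∈ A, 2 ≤ x ∧ x ≤ i - 1 := fun x hx => Finset.mem_Icc.mp (hA hx)
  have hBx : ∀ x ∈ B, i + 1 ≤ x ∧ x ≤ c - 1 := fun x hx => Finset.mem_Icc.mp (hB hx)
  have hdAB : Disjoint A B := by
    rw [Finset.disjoint_left]
    intro x hx hx'
    have := hAx x hx; have := hBx x hx'; omega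
  have hiAB : i ∉ A ∪ B := by
    rw [Finset.mem_union]
    rintro (h | h)
    · have := hAx i h; omega
    · have := hBx i h; omega
  rw [Finset.union_insert]
  have hsub : insert i (A ∪ B) ⊆ Finset.Icc 2 (c - 1) := by
    intro x hx
    rw [Finset.mem_Icc]
    rcases Finset.mem_insert.mp hx with rfl | hx'
    · omega
    · rcases Finset.mem_union.mp hx' with h | h
      · have := hAx x h; omega
      · have := hBx x h; omega
  have hfil : (insert i (A ∪ B)).filter (· < i) = A := by
    ext x
    simp only [Finset.mem_filter, Finset.mem_insert, Finset.mem_union]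
    constructor
    · rintro ⟨rfl | h | h, hlt⟩
      · omega
      · exact h
      · have := hBx x h; omega
    · intro h
      have := hAx x h
      exact ⟨Or.inr (Or.inl h), by omega⟩
  have hpos : pos (eWord c (insert i (A ∪ B))) i = i + A.card := by
    rw [pos_eWord _ hsub (by omega) (by omega), hfil]
  have he : eWord c (insert i (A ∪ B)) i = 2 := by
    unfold eWord
    rw [if_pos ⟨by omega, by omega⟩, if_pos (Finset.mem_insert_self i _)]
  have hv : vind c (insert i (A ∪ B)) i = if (i + A.card) % 3 = 2 then 0 else 1 := by
    rw [vind]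
    have hiff : Vert (eWord c (insert i (A ∪ B))) i ↔ ¬ ((i + A.card) % 3 = 2) := by
      rw [Vert, Horiz, he, hpos]
      norm_num
    rw [if_congr hiff rfl rfl, ite_not]
  have hcard : (insert i (A ∪ B)).card = A.card + B.card + 1 := by
    rw [Finset.card_insert_of_notMem hiAB, Finset.card_union_of_disjoint hdAB]
  have hcond : (c + (insert i (A ∪ B)).card) % 3 = 1 ↔ (c + A.card + 1 + B.card) % 3 = 1 := by
    rw [hcard]; constructor <;> (intro h; omega)
  rw [if_congr hcond rfl rfl, hv]

end BilliardAux

open BilliardAux Finset in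
/-- The total number of vertically smoothed crossings, summed over all reduced billiard
table words of crossing number `c`, equals the double sum of the Main Theorem. -/
theorem total_vertCount_eq (c : ℕ) (hc : 3 ≤ c) :
    (∑ᶠ ε ∈ WordSet c, vertCount c ε) =
      (∑ i ∈ Finset.Icc 2 (c - 1), ∑ d1 ∈ Finset.range (i - 1),
        ∑ d2 ∈ (Finset.range (c - i)).filter (fun d2 => (c + d1 + d2) % 3 = 1),
          (i - 2).choose d1 * (if (i + d1) % 3 = 1 then 0 else 1) * (c - i - 1).choose d2) +
      (∑ i ∈ Finset.Icc 2 (c - 1), ∑ d1 ∈ Finset.range (i - 1),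
        ∑ d2 ∈ (Finset.range (c - i)).filter (fun d2 => (c + d1 + 1 + d2) % 3 = 1),
          (i - 2).choose d1 * (if (i + d1) % 3 = 2 then 0 else 1) * (c - i - 1).choose d2) := by
  classical
  rw [wordSet_eq hc, finsum_mem_coe_finset, WFin, Finset.sum_image eWord_injOn,
    Finset.sum_congr rfl (fun S hS => vertCount_eWord hc S hS), Finset.sum_comm,
    ← Finset.sum_add_distrib]
  apply Finset.sum_congr rfl
  intro i hi
  rw [Finset.mem_Icc] at hi
  obtain ⟨hi2, hic⟩ := hi
  -- per-crossing count
  have hiR : i ∉ Finset.Icc (i + 1) (c - 1) := by rw [Finset.mem_Icc]; omega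
  have hLsplit : Finset.Icc 2 (c - 1)
      = Finset.Icc 2 (i - 1) ∪ insert i (Finset.Icc (i + 1) (c - 1)) := by
    ext x
    simp only [Finset.mem_Icc, Finset.mem_union, Finset.mem_insert]
    omega
  have hdisj : Disjoint (Finset.Icc 2 (i - 1)) (insert i (Finset.Icc (i + 1) (c - 1))) := by
    rw [Finset.disjoint_left]
    intro x hx hx'
    rw [Finset.mem_Icc] at hx
    simp only [Finset.mem_insert, Finset.mem_Icc] at hx'
    omega
  have hRcard : (Finset.Icc (i + 1) (c - 1)).card = c - i - 1 := by
    rw [Nat.card_Icc]; omega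
  rw [valid, Finset.sum_filter, hLsplit,
    sum_powerset_union _ _ hdisj]
  have hstep : ∀ A ∈ (Finset.Icc 2 (i - 1)).powerset,
      (∑ B ∈ (insert i (Finset.Icc (i + 1) (c - 1))).powerset,
          (if (c + (A ∪ B).card) % 3 = 1 then vind c (A ∪ B) i else 0))
        = (fun d1 =>
            (∑ d2 ∈ Finset.range (c - i), (c - i - 1).choose d2 •
               (if (c + d1 + d2) % 3 = 1 then (if (i + d1) % 3 = 1 then 0 else 1) else 0))
          + (∑ d2 ∈ Finset.range (c - i), (c - i - 1).choose d2 •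
               (if (c + d1 + 1 + d2) % 3 = 1 then (if (i + d1) % 3 = 2 then 0 else 1) else 0)))
            A.card := by
    intro A hA
    rw [Finset.mem_powerset] at hA
    rw [Finset.sum_powerset_insert hiR]
    congr 1
    · have h1 : ∑ B ∈ (Finset.Icc (i + 1) (c - 1)).powerset,
          (if (c + (A ∪ B).card) % 3 = 1 then vind c (A ∪ B) i else 0)
        = ∑ B ∈ (Finset.Icc (i + 1) (c - 1)).powerset,
          (fun d2 => if (c + A.card + d2) % 3 = 1
              then (if (i + A.card) % 3 = 1 then 0 else 1) else 0) B.card :=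
        Finset.sum_congr rfl (fun B hB => eval1 hc hi2 hic hA (Finset.mem_powerset.mp hB))
      rw [h1]
      refine (Finset.sum_powerset_apply_card (x := Finset.Icc (i + 1) (c - 1))
        (f := fun d2 => if (c + A.card + d2) % 3 = 1
          then (if (i + A.card) % 3 = 1 then 0 else 1) else 0)).trans ?_
      rw [hRcard, show c - i - 1 + 1 = c - i by omega]
    · have h2 : ∑ B ∈ (Finset.Icc (i + 1) (c - 1)).powerset,
          (if (c + (A ∪ insert i B).card) % 3 = 1 then vind c (A ∪ insert i B) i else 0)
        = ∑ B ∈ (Finset.Icc (i + 1) (c - 1)).powerset,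
          (fun d2 => if (c + A.card + 1 + d2) % 3 = 1
              then (if (i + A.card) % 3 = 2 then 0 else 1) else 0) B.card :=
        Finset.sum_congr rfl (fun B hB => eval2 hc hi2 hic hA (Finset.mem_powerset.mp hB))
      rw [h2]
      refine (Finset.sum_powerset_apply_card (x := Finset.Icc (i + 1) (c - 1))
        (f := fun d2 => if (c + A.card + 1 + d2) % 3 = 1
          then (if (i + A.card) % 3 = 2 then 0 else 1) else 0)).trans ?_
      rw [hRcard, show c - i - 1 + 1 = c - i by omega]
  rw [Finset.sum_congr rfl hstep]
  refine (Finset.sum_powerset_apply_card (x := Finset.Icc 2 (i - 1))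
    (f := fun d1 =>
      (∑ d2 ∈ Finset.range (c - i), (c - i - 1).choose d2 •
         (if (c + d1 + d2) % 3 = 1 then (if (i + d1) % 3 = 1 then 0 else 1) else 0))
      + (∑ d2 ∈ Finset.range (c - i), (c - i - 1).choose d2 •
         (if (c + d1 + 1 + d2) % 3 = 1 then (if (i + d1) % 3 = 2 then 0 else 1) else 0)))).trans ?_
  rw [Nat.card_Icc, show i - 1 + 1 - 2 + 1 = i - 1 by omega, ← Finset.sum_add_distrib]
  apply Finset.sum_congr rfl
  intro d1 _
  rw [show i - 1 + 1 - 2 = i - 2 by omega]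
  rw [Finset.sum_filter, Finset.sum_filter, smul_add, smul_eq_mul, smul_eq_mul,
    Finset.mul_sum, Finset.mul_sum]
  congr 1
  · apply Finset.sum_congr rfl
    intro d2 _
    simp only [smul_eq_mul]
    split_ifs <;> ring
  · apply Finset.sum_congr rfl
    intro d2 _
    simp only [smul_eq_mul]
    split_ifs <;> ring
end

section
/- Let c ≥ 3 and let i be an integer with 2 ≤ i ≤ c−1. Then the number of reduced billiard table words ε of crossing number c for which crossing i is vertically smoothed equals the number of reduced billiard table words ε of crossing number c for which crossing c+1−i is vertically smoothed. -/
/-- The reversal of a word. -/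
def revw (c : ℕ) (ε : ℕ → ℕ) : ℕ → ℕ :=
  fun j => if 1 ≤ j ∧ j ≤ c then ε (c + 1 - j) else 0

lemma sum_rev (ε : ℕ → ℕ) (c m : ℕ) (hm : m ≤ c) :
    ∑ j ∈ Finset.Icc 1 m, ε (c + 1 - j) = ∑ k ∈ Finset.Icc (c + 1 - m) c, ε k := by
  refine Finset.sum_nbij' (fun j => c + 1 - j) (fun k => c + 1 - k) ?_ ?_ ?_ ?_ ?_ <;>
    intros a ha <;> simp only [Finset.mem_Icc] at * <;> first | omega | (congr 1; omega)

lemma revw_involutive {c : ℕ} {ε : ℕ → ℕ} (hε : ε ∈ WordSet c) :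
    revw c (revw c ε) = ε := by
  funext j
  by_cases h : 1 ≤ j ∧ j ≤ c
  · have h2 : 1 ≤ c + 1 - j ∧ c + 1 - j ≤ c := by omega
    have h3 : c + 1 - (c + 1 - j) = j := by omega
    simp [revw, h, h2, h3]
  · simp [revw, h, hε.2 j h]

lemma revw_mem {c : ℕ} {ε : ℕ → ℕ} (hε : ε ∈ WordSet c) (hc : 1 ≤ c) :
    revw c ε ∈ WordSet c := by
  obtain ⟨⟨hval, h1, hcend, hsum⟩, hz⟩ := hε
  refine ⟨⟨?_, ?_, ?_, ?_⟩, ?_⟩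
  · intro j hj1 hjc
    have h : 1 ≤ j ∧ j ≤ c := ⟨hj1, hjc⟩
    simp only [revw, if_pos h]
    exact hval _ (by omega) (by omega)
  · have h : 1 ≤ (1:ℕ) ∧ 1 ≤ c := ⟨le_refl 1, hc⟩
    have h2 : c + 1 - 1 = c := by omega
    simp only [revw, if_pos h, h2]
    exact hcend
  · have h : 1 ≤ c ∧ c ≤ c := ⟨hc, le_refl c⟩
    have h2 : c + 1 - c = 1 := by omega
    simp only [revw, if_pos h, h2]
    exact h1
  · have : ∑ j ∈ Finset.Icc 1 c, revw c ε j = ∑ j ∈ Finset.Icc 1 c, ε (c + 1 - j) := by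
      apply Finset.sum_congr rfl
      intro j hj
      simp only [Finset.mem_Icc] at hj
      simp [revw, hj]
    rw [this, sum_rev ε c c le_rfl]
    have : c + 1 - c = 1 := by omega
    rw [this]
    exact hsum
  · intro j hj
    simp [revw, hj]

lemma vert_rev {c : ℕ} {ε : ℕ → ℕ} (hε : ε ∈ WordSet c) {i : ℕ} (hi1 : 1 ≤ i)
    (hic : i ≤ c) : Vert ε i ↔ Vert (revw c ε) (c + 1 - i) := by
  obtain ⟨⟨hval, h1, hcend, hsum⟩, hz⟩ := hε
  -- decompose the total sum
  set A := ∑ j ∈ Finset.Icc 1 (i - 1), ε j with hA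
  set B := ε i with hB
  set C := ∑ j ∈ Finset.Icc (i + 1) c, ε j with hC
  have hsplit : ∑ j ∈ Finset.Icc 1 c, ε j = A + B + C := by
    have e1 : Finset.Icc 1 c = Finset.Ioc 0 c := rfl
    have e2 : ∑ j ∈ Finset.Ioc 0 c, ε j
        = ∑ j ∈ Finset.Ioc 0 i, ε j + ∑ j ∈ Finset.Ioc i c, ε j :=
      (Finset.sum_Ioc_consecutive _ (by omega) hic).symm
    have e3 : Finset.Ioc 0 i = Finset.Icc 1 i := rfl
    have e4 : Finset.Ioc i c = Finset.Icc (i + 1) c := by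
      ext x; simp only [Finset.mem_Ioc, Finset.mem_Icc]; omega
    have e5 : ∑ j ∈ Finset.Icc 1 i, ε j = A + B := by
      obtain ⟨i', rfl⟩ : ∃ i', i = i' + 1 := ⟨i - 1, by omega⟩
      rw [Finset.sum_Icc_succ_top (by omega)]
      simp [hA, hB]
    rw [e1, e2, e3, e4, e5]
  have hSmod : (A + B + C) % 3 = 1 := by rw [← hsplit]; exact hsum
  have hposi : pos ε i = 1 + A := rfl
  -- value of revw at c+1-i
  have hri : 1 ≤ c + 1 - i ∧ c + 1 - i ≤ c := by omega
  have hval_rev : revw c ε (c + 1 - i) = B := by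
    have : c + 1 - (c + 1 - i) = i := by omega
    simp [revw, hri, this, hB]
  -- position of revw at c+1-i
  have hpos_rev : pos (revw c ε) (c + 1 - i) = 1 + C := by
    have h1' : c + 1 - i - 1 = c - i := by omega
    have h2' : ∑ j ∈ Finset.Icc 1 (c - i), revw c ε j
        = ∑ j ∈ Finset.Icc 1 (c - i), ε (c + 1 - j) := by
      apply Finset.sum_congr rfl
      intro j hj
      simp only [Finset.mem_Icc] at hj
      have : 1 ≤ j ∧ j ≤ c := by omega
      simp [revw, this]
    have h3' : c + 1 - (c - i) = i + 1 := by omega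
    rw [pos, h1', h2', sum_rev ε c (c - i) (by omega), h3', hC]
  have hB12 : B = 1 ∨ B = 2 := hval _ hi1 hic
  unfold Vert Horiz
  rw [hval_rev, hpos_rev, hposi, ← hB]
  constructor <;> intro h <;> intro hcontra <;> apply h <;> omega

/-- Symmetry: the number of words whose crossing `i` is vertically smoothed equals the
number of words whose crossing `c + 1 - i` is vertically smoothed. -/
theorem vert_symmetry (c : ℕ) (hc : 3 ≤ c) (i : ℕ) (h1 : 2 ≤ i) (h2 : i ≤ c - 1) :
    {ε | ε ∈ WordSet c ∧ Vert ε i}.ncard =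
      {ε | ε ∈ WordSet c ∧ Vert ε (c + 1 - i)}.ncard := by
  have hc1 : 1 ≤ c := by omega
  have hi1 : 1 ≤ i := by omega
  have hic : i ≤ c := by omega
  have key : {ε | ε ∈ WordSet c ∧ Vert ε (c + 1 - i)}
      = revw c '' {ε | ε ∈ WordSet c ∧ Vert ε i} := by
    ext ε
    simp only [Set.mem_image, Set.mem_setOf_eq]
    constructor
    · rintro ⟨hεW, hεV⟩
      refine ⟨revw c ε, ⟨revw_mem hεW hc1, ?_⟩, revw_involutive hεW⟩
      rw [vert_rev (revw_mem hεW hc1) hi1 hic, revw_involutive hεW]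
      exact hεV
    · rintro ⟨δ, ⟨hδW, hδV⟩, rfl⟩
      exact ⟨revw_mem hδW hc1, (vert_rev hδW hi1 hic).mp hδV⟩
  rw [key]
  rw [Set.ncard_image_of_injOn]
  intro a ha b hb hab
  have := congrArg (revw c) hab
  rwa [revw_involutive ha.1, revw_involutive hb.1] at this
end
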